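/- Let A be an n×n real matrix, and let 1 ≤ k ≤ n. Then the sum of all k×k principal minors of A satisfies e_k(A) = ((−1)^k/(n−k)!) · (d/dt)^{n−k} [det(tI − A)] evaluated at t = 0, where det(tI − A) is regarded as a polynomial in t and the derivative is the (n−k)-th polynomial derivative. -/

import Mathlib

open Matrix BigOperators Finset Polynomial

/-- The principal submatrix `A_{CC}` of `A` with rows and columns indexed by `C`. -/
def principalSub {n : ℕ} (A : Matrix (Fin n) (Fin n) ℝ) (C : Finset (Fin n)) :
    Matrix {x // x ∈ C} {x // x ∈ C} ℝ :=
  fun i j => A i j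

/-- `e_k(A)`: the sum of all `k × k` principal minors of `A` (with `e_0(A) = 1`). -/
noncomputable def esymmMinors {n : ℕ} (A : Matrix (Fin n) (Fin n) ℝ) (k : ℕ) : ℝ :=
  ∑ C ∈ Finset.univ.powersetCard k, (principalSub A C).det

/-!
Only the coefficient of `t^(n-k)` survives `(d/dt)^(n-k)` at `t = 0`, scaled by `(n-k)!`,
and by the principal-minor expansion of `det(tI - A)` that coefficient is `(-1)^k e_k(A)`.
-/

theorem Polynomial.eval_zero_iterate_derivative {R : Type*} [Semiring R] (p : R[X]) (m : ℕ) :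
    (derivative^[m] p).eval 0 = m.factorial * p.coeff m := by
  rw [← coeff_zero_eq_eval_zero, coeff_iterate_derivative, zero_add, Nat.descFactorial_self,
    nsmul_eq_mul]

theorem principalSub_eq_submatrix {n : ℕ} (A : Matrix (Fin n) (Fin n) ℝ) (C : Finset (Fin n)) :
    principalSub A C = A.submatrix (↑) (↑) :=
  rfl

theorem esymmMinors_eq_neg_one_pow_mul_charpoly_coeff {n : ℕ} (A : Matrix (Fin n) (Fin n) ℝ)
    {k : ℕ} (hkn : k ≤ n) :
    esymmMinors A k = (-1) ^ k * A.charpoly.coeff (n - k) := by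
  have h := A.charpoly_coeff_eq_sum_minors k (by simpa using hkn)
  rw [Fintype.card_fin] at h
  simp only [esymmMinors, principalSub_eq_submatrix]
  rw [h, ← mul_assoc, ← pow_add, Even.neg_one_pow ⟨k, rfl⟩, one_mul]

theorem esymmMinors_eq_deriv_charpoly_general (n : ℕ) (A : Matrix (Fin n) (Fin n) ℝ)
    (k : ℕ) (hkn : k ≤ n) :
    esymmMinors A k =
      ((-1 : ℝ) ^ k / (n - k).factorial) *
        (Polynomial.derivative^[n - k] A.charpoly).eval 0 := by
  have hfact : ((n - k).factorial : ℝ) ≠ 0 := by positivity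
  rw [eval_zero_iterate_derivative, esymmMinors_eq_neg_one_pow_mul_charpoly_coeff A hkn]
  field_simp

/-- The sum of all `k × k` principal minors of `A` satisfies
`e_k(A) = ((−1)^k/(n−k)!) · (d/dt)^{n−k} [det(tI − A)]` at `t = 0`, where
`det(tI − A)` is the characteristic polynomial `A.charpoly = det(X·I − A)`. -/
theorem esymmMinors_eq_deriv_charpoly (n : ℕ) (A : Matrix (Fin n) (Fin n) ℝ)
    (k : ℕ) (hk1 : 1 ≤ k) (hkn : k ≤ n) :
    esymmMinors A k =
      ((-1 : ℝ) ^ k / (n - k).factorial) *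
        (Polynomial.derivative^[n - k] A.charpoly).eval 0 :=
  esymmMinors_eq_deriv_charpoly_general n A k hkn
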